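/- arXiv:2304.11577 — 2 statements merged into one kernel-verified Lean document; each statement's English description precedes it below -/
import Mathlib

section
/- Fix T > 0, σ ∈ ℝ, R ∈ (0,1], t₀ ∈ [0,T), and let α(t) = λ e^{-ρ t} + (1-λ) e^{-γ t} with γ > ρ > 0 and λ ∈ (0,1). Define Q(s) = e^{-σ²(T-s)}/α(T-t₀) + ∫_s^T (1-R) e^{-σ²(r-s)}/(α(r-t₀) R) dr for s ∈ [t₀,T]. Then Q(s) > 0 for all s ∈ [t₀,T], and the function P(s) = 1/Q(s) is differentiable, strictly positive on [t₀,T], and satisfies the time-dependent Riccati equation P'(s) + σ² P(s) - ((1-R)/(α(s-t₀) R)) P(s)² = 0 for s ∈ [t₀,T] with terminal condition P(T) = α(T-t₀). -/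
open Real Set

/-! The substitution `P = 1 / Q` turns the Riccati equation `P' + a P - k P² = 0` into the linear
equation `Q' = a Q - k`, and the given `Q` is the variation-of-constants solution of the latter
with `Q(T) = 1 / α(T - t₀)`. It is positive because its terminal value is positive and the
source `k = (1 - R) / (α R)` is nonnegative. -/

noncomputable def linearTerminalSolution (a c T : ℝ) (k : ℝ → ℝ) (s : ℝ) : ℝ :=
  exp (-a * (T - s)) * c + ∫ r in s..T, k r * exp (-a * (r - s))

section linearTerminalSolution

variable (a c T : ℝ) (k : ℝ → ℝ)

theorem linearTerminalSolution_eq_exp_mul (s : ℝ) :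
    linearTerminalSolution a c T k s =
      exp (a * s) * (exp (-a * T) * c + ∫ r in s..T, k r * exp (-a * r)) := by
  have hexp : ∀ x, exp (-a * (x - s)) = exp (a * s) * exp (-a * x) := fun x => by
    rw [← exp_add]; ring_nf
  simp only [linearTerminalSolution, hexp, mul_add, ← intervalIntegral.integral_const_mul]
  ring_nf

@[simp]
theorem linearTerminalSolution_self : linearTerminalSolution a c T k T = c := by
  simp [linearTerminalSolution]

theorem hasDerivAt_linearTerminalSolution (hk : Continuous k) (s : ℝ) :
    HasDerivAt (linearTerminalSolution a c T k)
      (a * linearTerminalSolution a c T k s - k s) s := by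
  have hg : Continuous fun r => k r * exp (-a * r) := by fun_prop
  have hint : HasDerivAt (fun u => ∫ r in u..T, k r * exp (-a * r)) (-(k s * exp (-a * s))) s :=
    intervalIntegral.integral_hasDerivAt_left (hg.intervalIntegrable s T)
      (hg.stronglyMeasurableAtFilter _ _) hg.continuousAt
  have hexp : HasDerivAt (fun u => exp (a * u)) (exp (a * s) * a) s := by
    simpa using ((hasDerivAt_id s).const_mul a).exp
  rw [funext (linearTerminalSolution_eq_exp_mul a c T k)]
  refine (hexp.mul (hint.const_add (exp (-a * T) * c))).congr_deriv ?_
  have : exp (a * s) * exp (-a * s) = 1 := by rw [← exp_add]; simp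
  linear_combination -(k s) * this

theorem linearTerminalSolution_pos {s : ℝ} (hc : 0 < c) (hsT : s ≤ T)
    (hk : ∀ r ∈ Icc s T, 0 ≤ k r) : 0 < linearTerminalSolution a c T k s := by
  have hint : 0 ≤ ∫ r in s..T, k r * exp (-a * (r - s)) :=
    intervalIntegral.integral_nonneg hsT fun r hr => mul_nonneg (hk r hr) (exp_pos _).le
  unfold linearTerminalSolution
  positivity

end linearTerminalSolution

theorem HasDerivAt.one_div_of_linear {Q : ℝ → ℝ} {a k s : ℝ}
    (hQ : HasDerivAt Q (a * Q s - k) s) (hQs : Q s ≠ 0) :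
    HasDerivAt (fun x => 1 / Q x) (k * (1 / Q s) ^ 2 - a * (1 / Q s)) s := by
  simp only [one_div]
  refine (hQ.fun_inv hQs).congr_deriv ?_
  field_simp
  ring

theorem quasiHyperbolic_pos {l ρ γ : ℝ} (hl0 : 0 < l) (hl1 : l < 1) (t : ℝ) :
    0 < l * exp (-ρ * t) + (1 - l) * exp (-γ * t) := by
  have : 0 < 1 - l := sub_pos.2 hl1
  positivity

theorem zero_sum_precommitment_riccati_general
    (T σ R t₀ ρ γ l : ℝ) (hR0 : 0 < R) (hR1 : R ≤ 1)
    (hl0 : 0 < l) (hl1 : l < 1)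
    (α : ℝ → ℝ)
    (hα : α = fun t : ℝ => l * Real.exp (-ρ * t) + (1 - l) * Real.exp (-γ * t))
    (Q : ℝ → ℝ)
    (hQ : Q = fun s : ℝ =>
      Real.exp (-σ ^ 2 * (T - s)) / α (T - t₀)
        + ∫ r in s..T, (1 - R) * Real.exp (-σ ^ 2 * (r - s)) / (α (r - t₀) * R)) :
    (∀ s ∈ Set.Icc t₀ T, 0 < Q s) ∧
    (∃ P' : ℝ → ℝ, ∀ s ∈ Set.Icc t₀ T,
      HasDerivAt (fun s' : ℝ => 1 / Q s') (P' s) s ∧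
      0 < 1 / Q s ∧
      P' s + σ ^ 2 * (1 / Q s) - ((1 - R) / (α (s - t₀) * R)) * (1 / Q s) ^ 2 = 0) ∧
    1 / Q T = α (T - t₀) := by
  set k : ℝ → ℝ := fun r => (1 - R) / (α (r - t₀) * R)
  have hα_pos : ∀ t, 0 < α t := by subst hα; exact quasiHyperbolic_pos hl0 hl1
  have hk_cont : Continuous k := by
    have : Continuous α := by subst hα; fun_prop
    exact Continuous.div continuous_const (by fun_prop) fun r => (mul_pos (hα_pos _) hR0).ne'
  have hk_nonneg : ∀ r, 0 ≤ k r := fun r =>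
    div_nonneg (sub_nonneg.2 hR1) (mul_pos (hα_pos _) hR0).le
  have hQ_eq : Q = linearTerminalSolution (σ ^ 2) (α (T - t₀))⁻¹ T k := by
    subst hQ; ext s
    simp only [linearTerminalSolution, k, div_eq_mul_inv, neg_mul]
    congr 1
    exact intervalIntegral.integral_congr fun r _ => by ring
  have hQ_pos : ∀ s ≤ T, 0 < Q s := fun s hs => hQ_eq ▸
    linearTerminalSolution_pos _ _ _ _ (inv_pos.2 (hα_pos _)) hs fun r _ => hk_nonneg r
  refine ⟨fun s hs => hQ_pos s hs.2,
    ⟨fun s => k s * (1 / Q s) ^ 2 - σ ^ 2 * (1 / Q s), fun s hs => ⟨?_, ?_, by ring⟩⟩, ?_⟩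
  · exact (hQ_eq ▸ hasDerivAt_linearTerminalSolution _ _ _ _ hk_cont s).one_div_of_linear
      (hQ_pos s hs.2).ne'
  · exact one_div_pos.2 (hQ_pos s hs.2)
  · simp [hQ_eq]

/-- With `T > 0`, `σ ∈ ℝ`, `R ∈ (0,1]`, `t₀ ∈ [0,T)`, and the
quasi-hyperbolic discount `α(t) = λ e^{-ρt} + (1-λ) e^{-γt}`, the function
`Q(s) = e^{-σ²(T-s)}/α(T-t₀) + ∫_s^T (1-R) e^{-σ²(r-s)}/(α(r-t₀) R) dr` is
positive on `[t₀,T]`, and `P = 1/Q` is differentiable, strictly positive on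
`[t₀,T]`, and solves `P'(s) + σ² P(s) - ((1-R)/(α(s-t₀) R)) P(s)² = 0` with
`P(T) = α(T-t₀)`. -/
theorem zero_sum_precommitment_riccati
    (T σ R t₀ ρ γ l : ℝ) (hT : 0 < T) (hR0 : 0 < R) (hR1 : R ≤ 1)
    (ht₀ : t₀ ∈ Set.Ico (0 : ℝ) T)
    (hρ : 0 < ρ) (hργ : ρ < γ) (hl0 : 0 < l) (hl1 : l < 1)
    (α : ℝ → ℝ)
    (hα : α = fun t : ℝ => l * Real.exp (-ρ * t) + (1 - l) * Real.exp (-γ * t))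
    (Q : ℝ → ℝ)
    (hQ : Q = fun s : ℝ =>
      Real.exp (-σ ^ 2 * (T - s)) / α (T - t₀)
        + ∫ r in s..T, (1 - R) * Real.exp (-σ ^ 2 * (r - s)) / (α (r - t₀) * R)) :
    (∀ s ∈ Set.Icc t₀ T, 0 < Q s) ∧
    (∃ P' : ℝ → ℝ, ∀ s ∈ Set.Icc t₀ T,
      HasDerivAt (fun s' : ℝ => 1 / Q s') (P' s) s ∧
      0 < 1 / Q s ∧
      P' s + σ ^ 2 * (1 / Q s) - ((1 - R) / (α (s - t₀) * R)) * (1 / Q s) ^ 2 = 0) ∧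
    1 / Q T = α (T - t₀) :=
  zero_sum_precommitment_riccati_general T σ R t₀ ρ γ l hR0 hR1 hl0 hl1 α hα Q hQ
end

section
/- Fix T > 0, σ ∈ ℝ, R > 0, and let α(t) = λ e^{-ρ t} + (1-λ) e^{-γ t} with γ > ρ > 0 and λ ∈ (0,1). Then there exists exactly one continuous function P : Δ[0,T] → ℝ, where Δ[0,T] = {(t,s) : 0 ≤ t ≤ s ≤ T}, such that for each fixed t the map s ↦ P(t,s) is differentiable on [t,T] and satisfies the nonlocal Riccati equation ∂_s P(t,s) + σ² P(t,s) - (2/R) P(t,s) P(s,s) + α(s-t) P(s,s)²/R = 0 for all (t,s) ∈ Δ[0,T], with terminal condition P(t,T) = α(T-t) for all t ∈ [0,T]. -/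
open Real Set

/-- `P` (with `s`-partial derivative `Ps`) is a continuous solution, on
`Δ[0,T] = {(t,s) : 0 ≤ t ≤ s ≤ T}`, of the nonlocal Riccati equation of the
single-player time-inconsistent problem:
`∂ₛP(t,s) + σ² P(t,s) - (2/R) P(t,s) P(s,s) + α(s-t) P(s,s)²/R = 0`
with terminal condition `P(t,T) = α(T-t)`. -/
def IsSinglePlayerRiccatiSolution (T σ R : ℝ) (α : ℝ → ℝ) (P Ps : ℝ → ℝ → ℝ) : Prop :=
  ContinuousOn (fun p : ℝ × ℝ => P p.1 p.2)
    {p : ℝ × ℝ | 0 ≤ p.1 ∧ p.1 ≤ p.2 ∧ p.2 ≤ T} ∧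
  (∀ t ∈ Set.Icc (0 : ℝ) T, ∀ s ∈ Set.Icc t T,
    HasDerivWithinAt (P t) (Ps t s) (Set.Icc t T) s ∧
    Ps t s + σ ^ 2 * P t s - (2 / R) * P t s * P s s
      + α (s - t) * (P s s) ^ 2 / R = 0) ∧
  (∀ t ∈ Set.Icc (0 : ℝ) T, P t T = α (T - t))

/-!
Because `α` is a sum of two exponentials, the Ansatz
`P(t,s) = l e^{-ρ(s-t)} A(T-s) + (1-l) e^{-γ(s-t)} B(T-s)` reduces the nonlocal equation to a
two-dimensional Riccati system for `(A, B)` started at `(1, 1)`. This system has a solution on all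
of `[0, T]` because the box `[0, M]²` is invariant for `M` large: on the faces `A = 0`, `B = 0` the
field is `p²/R ≥ 0`, where `p = lA + (1-l)B = P(s,s)`, and on the faces `A = M`, `B = M` it is
nonpositive. Picard–Lindelöf for the field clamped to the box therefore gives a global solution
that never feels the clamp.

For uniqueness, the difference `D = Q - P` of two solutions satisfies
`|∂ₛD(t,s)| ≤ K₁ |D(t,s)| + K₂ |D(s,s)|` and `D(t,T) = 0`. Once `D` vanishes on the diagonal over
`[t₀, T]`, backward Grönwall in `s` bounds the diagonal error on a short window `[t₁, t₀]` by half
its own maximum, so it vanishes there too; finitely many windows cover `[0, T]`.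
-/

open Topology NNReal

section Calculus

variable {E : Type*} [NormedAddCommGroup E] [NormedSpace ℝ E]

theorem HasDerivWithinAt.Ici_of_Icc {f : ℝ → E} {f' : E} {a b x : ℝ}
    (h : HasDerivWithinAt f f' (Icc a b) x) (hx : x ∈ Ico a b) :
    HasDerivWithinAt f f' (Ici x) x :=
  h.mono_of_mem_nhdsWithin (Icc_mem_nhdsGE_of_mem hx)

/-- Comparison with the lines `c + η (x - a)`, `η > 0`, to which the strict fencing theorem
applies. -/
theorem image_le_of_deriv_nonpos_on_superlevel {f f' : ℝ → ℝ} {a b c : ℝ}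
    (hf : ∀ x ∈ Icc a b, HasDerivWithinAt f (f' x) (Icc a b) x) (ha : f a ≤ c)
    (hf' : ∀ x ∈ Icc a b, c ≤ f x → f' x ≤ 0) :
    ∀ x ∈ Icc a b, f x ≤ c := by
  intro x hx
  refine le_of_forall_pos_le_add fun ε hε => ?_
  have hd : 0 < x - a + 1 := by linarith [hx.1]
  have hη : 0 < ε / (x - a + 1) := div_pos hε hd
  have hline := image_le_of_deriv_right_lt_deriv_boundary'
    (fun y hy => (hf y hy).continuousWithinAt)
    (fun y hy => (hf y (Ico_subset_Icc_self hy)).Ici_of_Icc hy)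
    (B := fun y => c + ε / (x - a + 1) * (y - a)) (B' := fun _ => ε / (x - a + 1))
    (by simpa using ha) (by fun_prop)
    (fun y _ => by simpa using ((hasDerivAt_id y).sub_const a).const_mul _ |>.const_add c
      |>.hasDerivWithinAt)
    (fun y hy hfy => (hf' y (Ico_subset_Icc_self hy) (by nlinarith [hy.1])).trans_lt hη) hx
  calc f x ≤ c + ε / (x - a + 1) * (x - a) := hline
    _ ≤ c + ε := by
      gcongr c + ?_
      rw [div_mul_eq_mul_div, div_le_iff₀ hd]
      nlinarith [hx.1]

theorem le_image_of_deriv_nonneg_on_sublevel {f f' : ℝ → ℝ} {a b c : ℝ}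
    (hf : ∀ x ∈ Icc a b, HasDerivWithinAt f (f' x) (Icc a b) x) (ha : c ≤ f a)
    (hf' : ∀ x ∈ Icc a b, f x ≤ c → 0 ≤ f' x) :
    ∀ x ∈ Icc a b, c ≤ f x := by
  intro x hx
  have := image_le_of_deriv_nonpos_on_superlevel (f := fun x => -f x) (f' := fun x => -f' x)
    (c := -c) (fun x hx => (hf x hx).neg) (neg_le_neg ha)
    (fun x hx h => neg_nonpos.mpr (hf' x hx (neg_le_neg_iff.mp h))) x hx
  exact neg_le_neg_iff.mp this

theorem norm_le_gronwallBound_of_norm_deriv_le_of_right {f f' : ℝ → E} {δ K ε a b : ℝ}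
    (hf : ∀ x ∈ Icc a b, HasDerivWithinAt f (f' x) (Icc a b) x) (hb : ‖f b‖ ≤ δ)
    (bound : ∀ x ∈ Icc a b, ‖f' x‖ ≤ K * ‖f x‖ + ε) :
    ∀ x ∈ Icc a b, ‖f x‖ ≤ gronwallBound δ K ε (b - x) := by
  have hneg : ∀ y ∈ Icc (-b) (-a), -y ∈ Icc a b :=
    fun y hy => ⟨by linarith [hy.2], by linarith [hy.1]⟩
  have hg : ∀ y ∈ Icc (-b) (-a),
      HasDerivWithinAt (fun y => f (-y)) (-f' (-y)) (Icc (-b) (-a)) y := by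
    intro y hy
    simpa [Function.comp_def] using
      (hf (-y) (hneg y hy)).scomp y (hasDerivAt_neg y).hasDerivWithinAt fun z hz => hneg z hz
  intro x hx
  have hx' : -x ∈ Icc (-b) (-a) := ⟨neg_le_neg hx.2, neg_le_neg hx.1⟩
  simpa [sub_eq_add_neg, add_comm] using norm_le_gronwallBound_of_norm_deriv_right_le
    (fun y hy => (hg y hy).continuousWithinAt)
    (fun y hy => (hg y (Ico_subset_Icc_self hy)).Ici_of_Icc hy) (by simpa using hb)
    (fun y hy => by simpa using bound (-y) (hneg y (Ico_subset_Icc_self hy))) (-x) hx'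

end Calculus

theorem gronwallBound_δ0_eq_mul (K ε x : ℝ) :
    gronwallBound 0 K ε x = ε * gronwallBound 0 K 1 x := by
  unfold gronwallBound
  split_ifs <;> ring

theorem exists_pos_forall_mul_gronwallBound_le (K C : ℝ) {η : ℝ} (hη : 0 < η) :
    ∃ h > 0, ∀ x ∈ Icc 0 h, C * gronwallBound 0 K 1 x ≤ η := by
  have hcont : ContinuousAt (fun x => C * gronwallBound 0 K 1 x) 0 :=
    ((hasDerivAt_gronwallBound 0 K 1 0).continuousAt).const_mul C
  have hlt : ∀ᶠ x in 𝓝 0, C * gronwallBound 0 K 1 x < η :=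
    hcont.eventually (gt_mem_nhds (by simpa [gronwallBound_x0] using hη))
  obtain ⟨ε, hε, hball⟩ := Metric.eventually_nhds_iff.mp hlt
  refine ⟨ε / 2, half_pos hε, fun x hx => (hball ?_).le⟩
  rw [Real.dist_eq, sub_zero, abs_of_nonneg hx.1]
  linarith [hx.2]

theorem backward_step_induction {p : ℝ → Prop} {a b h : ℝ} (hab : a ≤ b) (hh : 0 < h)
    (hb : p b) (step : ∀ t₀ ∈ Icc a b, p t₀ → ∀ t₁ ∈ Icc a t₀, t₀ - t₁ ≤ h → p t₁) : p a := by
  have hn : ∀ n : ℕ, p (max a (b - n * h)) := by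
    intro n
    induction n with
    | zero => simpa [max_eq_right hab] using hb
    | succ n ih =>
      refine step _ ⟨le_max_left _ _, max_le hab (by nlinarith [n.cast_nonneg (α := ℝ)])⟩ ih _
        ⟨le_max_left _ _, max_le_max le_rfl (by push_cast; nlinarith)⟩ ?_
      push_cast
      rcases le_total (b - n * h) a with hle | hle
      · rw [max_eq_left hle, max_eq_left (by nlinarith)]; linarith
      · rw [max_eq_right hle]
        linarith [le_max_right a (b - (n + 1) * h)]
  obtain ⟨n, hn'⟩ := exists_nat_gt ((b - a) / h)
  have : b - n * h ≤ a := by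
    rw [div_lt_iff₀ hh] at hn'; linarith
  simpa [max_eq_left this] using hn n

section Volterra

variable {a T K₁ K₂ : ℝ} {D D' : ℝ → ℝ → ℝ}
  (hD : ∀ t ∈ Icc a T, ∀ s ∈ Icc t T, HasDerivWithinAt (D t) (D' t s) (Icc t T) s)
  (hDT : ∀ t ∈ Icc a T, D t T = 0)
  (hD' : ∀ t ∈ Icc a T, ∀ s ∈ Icc t T, |D' t s| ≤ K₁ * |D t s| + K₂ * |D s s|)
include hD hDT hD'

theorem eq_zero_of_diag_eq_zero {t₀ : ℝ} (hdiag : ∀ u ∈ Icc t₀ T, D u u = 0) :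
    ∀ t ∈ Icc a t₀, ∀ s ∈ Icc t₀ T, D t s = 0 := by
  intro t ht s hs
  have htT : t ∈ Icc a T := ⟨ht.1, ht.2.trans (hs.1.trans hs.2)⟩
  have hsub : Icc t₀ T ⊆ Icc t T := Icc_subset_Icc_left ht.2
  have := norm_le_gronwallBound_of_norm_deriv_le_of_right (δ := 0) (ε := 0)
    (fun s hs => (hD t htT s (hsub hs)).mono hsub) (by simp [hDT t htT])
    (fun s hs => by simpa [hdiag s hs] using hD' t htT s (hsub hs)) s hs
  simpa [gronwallBound_ε0_δ0] using this

theorem abs_diag_le_gronwallBound (hK₂ : 0 ≤ K₂) {t₀ Δ : ℝ} (ht₀ : t₀ ≤ T)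
    (hdiag : ∀ u ∈ Icc t₀ T, D u u = 0) {t : ℝ} (ht : t ∈ Icc a t₀)
    (hΔ : ∀ u ∈ Icc t t₀, |D u u| ≤ Δ) :
    |D t t| ≤ gronwallBound 0 K₁ (K₂ * Δ) (t₀ - t) := by
  have htT : t ∈ Icc a T := ⟨ht.1, ht.2.trans ht₀⟩
  have hsub : Icc t t₀ ⊆ Icc t T := Icc_subset_Icc_right ht₀
  refine norm_le_gronwallBound_of_norm_deriv_le_of_right
    (fun s hs => (hD t htT s (hsub hs)).mono hsub)
    (by simp [eq_zero_of_diag_eq_zero hD hDT hD' hdiag t ht t₀ ⟨le_rfl, ht₀⟩])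
    (fun s hs => ?_) t ⟨le_rfl, ht.2⟩
  simp only [Real.norm_eq_abs]
  nlinarith [hD' t htT s (hsub hs), hΔ s hs]

theorem diag_eq_zero_of_step (hK₂ : 0 ≤ K₂) (hcont : ContinuousOn (fun u => D u u) (Icc a T))
    {h : ℝ} (hsmall : ∀ x ∈ Icc 0 h, K₂ * gronwallBound 0 K₁ 1 x ≤ 1 / 2)
    {t₀ : ℝ} (ht₀ : t₀ ∈ Icc a T) (hdiag : ∀ u ∈ Icc t₀ T, D u u = 0)
    {t₁ : ℝ} (ht₁ : t₁ ∈ Icc a t₀) (hstep : t₀ - t₁ ≤ h) :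
    ∀ u ∈ Icc t₁ T, D u u = 0 := by
  obtain ⟨u₀, hu₀, hmax⟩ := isCompact_Icc.exists_isMaxOn (nonempty_Icc.2 ht₁.2)
    (hcont.mono (Icc_subset_Icc ht₁.1 ht₀.2)).abs
  have hhalf : ∀ u ∈ Icc t₁ t₀, |D u u| ≤ |D u₀ u₀| / 2 := fun u hu => calc
    |D u u| ≤ gronwallBound 0 K₁ (K₂ * |D u₀ u₀|) (t₀ - u) :=
      abs_diag_le_gronwallBound hD hDT hD' hK₂ ht₀.2 hdiag ⟨ht₁.1.trans hu.1, hu.2⟩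
        fun v hv => hmax ⟨hu.1.trans hv.1, hv.2⟩
    _ = |D u₀ u₀| * (K₂ * gronwallBound 0 K₁ 1 (t₀ - u)) := by
      rw [gronwallBound_δ0_eq_mul]; ring
    _ ≤ |D u₀ u₀| * (1 / 2) := by
      gcongr
      exact hsmall _ ⟨by linarith [hu.2], by linarith [hu.1]⟩
    _ = |D u₀ u₀| / 2 := by ring
  have hmax0 : |D u₀ u₀| = 0 := by linarith [hhalf u₀ hu₀, abs_nonneg (D u₀ u₀)]
  intro u hu
  rcases le_total u t₀ with hut₀ | ht₀u
  · exact abs_eq_zero.mp (le_antisymm (by linarith [hhalf u ⟨hu.1, hut₀⟩]) (abs_nonneg _))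
  · exact hdiag u ⟨ht₀u, hu.2⟩

theorem eq_zero_of_abs_deriv_le_volterra (hK₂ : 0 ≤ K₂)
    (hcont : ContinuousOn (fun u => D u u) (Icc a T)) :
    ∀ t ∈ Icc a T, ∀ s ∈ Icc t T, D t s = 0 := by
  intro t ht s hs
  obtain ⟨h, hh, hsmall⟩ := exists_pos_forall_mul_gronwallBound_le K₁ K₂ one_half_pos
  have hdiag : ∀ u ∈ Icc a T, D u u = 0 := by
    refine backward_step_induction (p := fun t₀ => ∀ u ∈ Icc t₀ T, D u u = 0)
      (ht.1.trans ht.2) hh ?_ fun t₀ ht₀ hdiag t₁ ht₁ hstep =>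
        diag_eq_zero_of_step hD hDT hD' hK₂ hcont hsmall ht₀ hdiag ht₁ hstep
    intro u hu
    obtain rfl : u = T := le_antisymm hu.2 hu.1
    exact hDT u ⟨ht.1.trans ht.2, le_rfl⟩
  exact eq_zero_of_diag_eq_zero hD hDT hD'
    (fun u hu => hdiag u ⟨ht.1.trans hu.1, hu.2⟩) t ⟨ht.1, le_rfl⟩ s hs

end Volterra

theorem abs_riccati_sub_le {σ R a x y p q A C : ℝ} (ha : |a| ≤ A) (hy : |y| ≤ C)
    (hp : |p| ≤ C) (hq : |q| ≤ C) :
    |(σ ^ 2 * x - 2 / R * x * p + a * p ^ 2 / R) - (σ ^ 2 * y - 2 / R * y * q + a * q ^ 2 / R)|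
      ≤ (σ ^ 2 + 2 * C * |R⁻¹|) * |x - y| + 2 * C * (1 + A) * |R⁻¹| * |p - q| := by
  have hdiff : (σ ^ 2 * x - 2 / R * x * p + a * p ^ 2 / R)
      - (σ ^ 2 * y - 2 / R * y * q + a * q ^ 2 / R)
      = σ ^ 2 * (x - y) + R⁻¹ * (a * (p + q) * (p - q) - 2 * ((x - y) * p + y * (p - q))) := by
    ring
  have hC : 0 ≤ C := (abs_nonneg y).trans hy
  have hA : 0 ≤ A := (abs_nonneg a).trans ha
  rw [hdiff]
  calc _ ≤ σ ^ 2 * |x - y|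
        + |R⁻¹| * (|a| * (|p| + |q|) * |p - q| + 2 * (|x - y| * |p| + |y| * |p - q|)) := by
        refine (abs_add_le _ _).trans (add_le_add (by rw [abs_mul, abs_sq]) ?_)
        rw [abs_mul]
        gcongr
        refine (abs_sub _ _).trans (add_le_add ?_ ?_)
        · rw [abs_mul, abs_mul]; gcongr; exact abs_add_le _ _
        · rw [abs_mul, abs_two]; gcongr
          exact (abs_add_le _ _).trans (by rw [abs_mul, abs_mul])
    _ ≤ σ ^ 2 * |x - y| + |R⁻¹| * (A * (C + C) * |p - q| + 2 * (|x - y| * C + C * |p - q|)) := by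
        gcongr
    _ = _ := by ring

theorem isCompact_setOf_triangle (T : ℝ) :
    IsCompact {p : ℝ × ℝ | 0 ≤ p.1 ∧ p.1 ≤ p.2 ∧ p.2 ≤ T} :=
  (isCompact_Icc.prod (isCompact_Icc (a := (0 : ℝ)) (b := T))).of_isClosed_subset
    ((isClosed_le continuous_const continuous_fst).inter
      ((isClosed_le continuous_fst continuous_snd).inter
        (isClosed_le continuous_snd continuous_const)))
    fun _ hp => ⟨⟨hp.1, hp.2.1.trans hp.2.2⟩, ⟨hp.1.trans hp.2.1, hp.2.2⟩⟩

theorem IsSinglePlayerRiccatiSolution.eq_of_continuousOn {T σ R : ℝ} {α : ℝ → ℝ}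
    {P Ps Q Qs : ℝ → ℝ → ℝ} (hα : ContinuousOn α (Icc 0 T))
    (hP : IsSinglePlayerRiccatiSolution T σ R α P Ps)
    (hQ : IsSinglePlayerRiccatiSolution T σ R α Q Qs) :
    ∀ t ∈ Icc (0 : ℝ) T, ∀ s ∈ Icc t T, Q t s = P t s := by
  obtain ⟨hPc, hPd, hPT⟩ := hP
  obtain ⟨hQc, hQd, hQT⟩ := hQ
  obtain ⟨C, hC⟩ := (isCompact_setOf_triangle T).exists_bound_of_continuousOn (hPc.prodMk hQc)
  obtain ⟨A, hA⟩ := isCompact_Icc.exists_bound_of_continuousOn hα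
  have hP_le : ∀ t ∈ Icc (0 : ℝ) T, ∀ s ∈ Icc t T, |P t s| ≤ |C| := fun t ht s hs =>
    ((norm_fst_le _).trans (hC (t, s) ⟨ht.1, hs.1, hs.2⟩)).trans (le_abs_self C)
  have hQ_le : ∀ t ∈ Icc (0 : ℝ) T, ∀ s ∈ Icc t T, |Q t s| ≤ |C| := fun t ht s hs =>
    ((norm_snd_le _).trans (hC (t, s) ⟨ht.1, hs.1, hs.2⟩)).trans (le_abs_self C)
  have hdiag : MapsTo (fun u : ℝ => (u, u)) (Icc 0 T) {p : ℝ × ℝ | 0 ≤ p.1 ∧ p.1 ≤ p.2 ∧ p.2 ≤ T} :=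
    fun u hu => ⟨hu.1, le_rfl, hu.2⟩
  have hzero := eq_zero_of_abs_deriv_le_volterra (D := fun t s => Q t s - P t s)
    (D' := fun t s => Qs t s - Ps t s) (K₁ := σ ^ 2 + 2 * |C| * |R⁻¹|)
    (K₂ := 2 * |C| * (1 + |A|) * |R⁻¹|)
    (fun t ht s hs => ((hQd t ht s hs).1.sub (hPd t ht s hs).1))
    (fun t ht => by simp [hPT t ht, hQT t ht])
    (fun t ht s hs => by
      have hs0 : s ∈ Icc (0 : ℝ) T := ⟨ht.1.trans hs.1, hs.2⟩
      have hQs : Qs t s = -(σ ^ 2 * Q t s - 2 / R * Q t s * Q s s + α (s - t) * Q s s ^ 2 / R) := by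
        linarith [(hQd t ht s hs).2]
      have hPs : Ps t s = -(σ ^ 2 * P t s - 2 / R * P t s * P s s + α (s - t) * P s s ^ 2 / R) := by
        linarith [(hPd t ht s hs).2]
      rw [hQs, hPs, ← neg_sub', abs_neg]
      exact abs_riccati_sub_le
        ((hA (s - t) ⟨by linarith [hs.1], by linarith [ht.1, hs.2]⟩).trans (le_abs_self A))
        (hP_le t ht s hs) (hQ_le s hs0 s ⟨le_rfl, hs.2⟩) (hP_le s hs0 s ⟨le_rfl, hs.2⟩))
    (by positivity)
    ((hQc.comp (by fun_prop) hdiag).sub (hPc.comp (by fun_prop) hdiag))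
  exact fun t ht s hs => sub_eq_zero.mp (hzero t ht s hs)

theorem exists_forall_mem_Icc_hasDerivWithinAt_of_lipschitzWith {E : Type*}
    [NormedAddCommGroup E] [NormedSpace ℝ E] [CompleteSpace E] {f : E → E} {K L : ℝ≥0}
    (hf : LipschitzWith K f) (hL : ∀ x, ‖f x‖ ≤ L) {T : ℝ} (hT : 0 ≤ T) (x₀ : E) :
    ∃ v : ℝ → E, v 0 = x₀ ∧ ∀ t ∈ Icc 0 T, HasDerivWithinAt v (f (v t)) (Icc 0 T) t :=
  (IsPicardLindelof.of_time_independent (t₀ := ⟨0, le_rfl, hT⟩) (x₀ := x₀)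
    (a := L * T.toNNReal) (r := 0) (fun x _ => hL x) hf.lipschitzOnWith
    (by simp [Real.coe_toNNReal _ hT, max_eq_left hT])).exists_eq_forall_mem_Icc_hasDerivWithinAt₀

theorem ContDiff.exists_lipschitzWith_comp_of_mapsTo_compact {E F : Type*}
    [NormedAddCommGroup E] [NormedSpace ℝ E] [NormedAddCommGroup F] [NormedSpace ℝ F]
    {f : E → F} (hf : ContDiff ℝ 1 f) {g : E → E} {Kg : ℝ≥0} (hg : LipschitzWith Kg g)
    {s : Set E} (hs : IsCompact s) (hgs : ∀ x, g x ∈ s) :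
    ∃ K L : ℝ≥0, LipschitzWith K (f ∘ g) ∧ ∀ x, ‖f (g x)‖ ≤ L := by
  obtain ⟨K, hK⟩ := hf.locallyLipschitz.locallyLipschitzOn.exists_lipschitzOnWith_of_compact hs
  obtain ⟨C, hC⟩ := hs.exists_bound_of_continuousOn hf.continuous.continuousOn
  refine ⟨K * Kg, C.toNNReal, ?_, fun x => (hC _ (hgs x)).trans (Real.le_coe_toNNReal C)⟩
  exact lipschitzOnWith_univ.mp (hK.comp hg.lipschitzOnWith fun x _ => hgs x)

/-- The rate of one exponential mode of `riccatiAnsatz` in reversed time `T - s`, driven by the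
diagonal value `p`. -/
noncomputable def riccatiRate (σ R κ p x : ℝ) : ℝ := (σ ^ 2 - κ) * x - 2 / R * p * x + p ^ 2 / R

noncomputable def riccatiField (σ R ρ γ l : ℝ) (x : ℝ × ℝ) : ℝ × ℝ :=
  (riccatiRate σ R ρ (l * x.1 + (1 - l) * x.2) x.1,
    riccatiRate σ R γ (l * x.1 + (1 - l) * x.2) x.2)

theorem contDiff_riccatiField (σ R ρ γ l : ℝ) : ContDiff ℝ 1 (riccatiField σ R ρ γ l) := by
  unfold riccatiField riccatiRate
  fun_prop

theorem riccatiRate_nonpos {σ R κ p M : ℝ} (hR : 0 < R) (hκ : 0 ≤ κ) (hp : R * σ ^ 2 ≤ p)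
    (hpM : p ≤ M) : riccatiRate σ R κ p M ≤ 0 := by
  have hp0 : 0 ≤ p := (by positivity : 0 ≤ R * σ ^ 2).trans hp
  have hnum : R * ((σ ^ 2 - κ) * M) - 2 * p * M + p ^ 2 ≤ 0 := by
    nlinarith [mul_nonneg hκ (hp0.trans hpM), mul_le_mul_of_nonneg_right hp (hp0.trans hpM),
      mul_nonneg hp0 (sub_nonneg.mpr hpM)]
  have : riccatiRate σ R κ p M = (R * ((σ ^ 2 - κ) * M) - 2 * p * M + p ^ 2) / R := by
    unfold riccatiRate; field_simp
  rw [this]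
  exact div_nonpos_of_nonpos_of_nonneg hnum hR.le

def boxClamp (M : ℝ) (x : ℝ × ℝ) : ℝ × ℝ := (max 0 (min x.1 M), max 0 (min x.2 M))

theorem lipschitzWith_boxClamp (M : ℝ) : LipschitzWith 1 (boxClamp M) := by
  unfold boxClamp
  simpa using ((LipschitzWith.prod_fst.min_const M).const_max 0).prodMk
    ((LipschitzWith.prod_snd.min_const M).const_max 0)

theorem boxClamp_mem {M : ℝ} (hM : 0 ≤ M) (x : ℝ × ℝ) :
    boxClamp M x ∈ Icc 0 M ×ˢ Icc 0 M :=
  ⟨⟨le_max_left _ _, max_le hM (min_le_right _ _)⟩, ⟨le_max_left _ _, max_le hM (min_le_right _ _)⟩⟩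

theorem boxClamp_eq_self {M : ℝ} {x : ℝ × ℝ} (hx : x ∈ Icc 0 M ×ˢ Icc 0 M) :
    boxClamp M x = x := by
  obtain ⟨⟨h₁, h₁'⟩, ⟨h₂, h₂'⟩⟩ := hx
  simp [boxClamp, h₁, h₁', h₂, h₂']

theorem mem_Icc_of_hasDerivWithinAt_riccatiRate {σ R κ M T : ℝ} {f p : ℝ → ℝ} (hR : 0 < R)
    (hκ : 0 ≤ κ) (hf₀ : f 0 ∈ Icc 0 M)
    (hf : ∀ τ ∈ Icc 0 T,
      HasDerivWithinAt f (riccatiRate σ R κ (p τ) (max 0 (min (f τ) M))) (Icc 0 T) τ)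
    (hp : ∀ τ ∈ Icc 0 T, M ≤ f τ → R * σ ^ 2 ≤ p τ ∧ p τ ≤ M) :
    ∀ τ ∈ Icc 0 T, f τ ∈ Icc 0 M := by
  have hM : 0 ≤ M := hf₀.1.trans hf₀.2
  intro τ hτ
  refine ⟨le_image_of_deriv_nonneg_on_sublevel hf hf₀.1 (fun τ _ hle => ?_) τ hτ,
    image_le_of_deriv_nonpos_on_superlevel hf hf₀.2 (fun τ hτ hge => ?_) τ hτ⟩
  · rw [max_eq_left ((min_le_left _ _).trans hle)]
    simp only [riccatiRate, mul_zero, sub_zero, zero_add]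
    positivity
  · rw [min_eq_right hge, max_eq_right hM]
    exact riccatiRate_nonpos hR hκ (hp τ hτ hge).1 (hp τ hτ hge).2

theorem exists_hasDerivWithinAt_riccatiField {σ R ρ γ l T : ℝ} (hR : 0 < R) (hl₀ : 0 < l)
    (hl₁ : l < 1) (hρ : 0 ≤ ρ) (hγ : 0 ≤ γ) (hT : 0 ≤ T) :
    ∃ v : ℝ → ℝ × ℝ, v 0 = (1, 1) ∧
      ∀ τ ∈ Icc 0 T, HasDerivWithinAt v (riccatiField σ R ρ γ l (v τ)) (Icc 0 T) τ := by
  set M := max 1 (max (R * σ ^ 2 / l) (R * σ ^ 2 / (1 - l)))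
  have h1M : 1 ≤ M := le_max_left _ _
  have hlM : R * σ ^ 2 ≤ l * M := by
    rw [← div_le_iff₀' hl₀]
    exact (le_max_left _ _).trans (le_max_right _ _)
  have hlM' : R * σ ^ 2 ≤ (1 - l) * M := by
    rw [← div_le_iff₀' (sub_pos.mpr hl₁)]
    exact (le_max_right _ _).trans (le_max_right _ _)
  obtain ⟨K, L, hK, hL⟩ :=
    (contDiff_riccatiField σ R ρ γ l).exists_lipschitzWith_comp_of_mapsTo_compact
      (lipschitzWith_boxClamp M) (isCompact_Icc.prod isCompact_Icc) (boxClamp_mem (by linarith))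
  obtain ⟨v, hv0, hv⟩ := exists_forall_mem_Icc_hasDerivWithinAt_of_lipschitzWith hK hL hT (1, 1)
  set p := fun τ => l * max 0 (min (v τ).1 M) + (1 - l) * max 0 (min (v τ).2 M)
  have hclamp : ∀ τ, max 0 (min (v τ).2 M) ∈ Icc 0 M ∧ max 0 (min (v τ).1 M) ∈ Icc 0 M :=
    fun τ => (boxClamp_mem (by linarith) (v τ)).symm
  have hbox : ∀ τ ∈ Icc 0 T, v τ ∈ Icc 0 M ×ˢ Icc 0 M := fun τ hτ =>
    ⟨mem_Icc_of_hasDerivWithinAt_riccatiRate (p := p) hR hρ (by simp [hv0, h1M])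
        (fun τ hτ => (hv τ hτ).fst) (fun τ _ hge => by
          obtain ⟨h₀, h₁⟩ := (hclamp τ).1
          simp only [p, min_eq_right hge, max_eq_right (by linarith : (0 : ℝ) ≤ M)]
          constructor <;> nlinarith [mul_nonneg (sub_pos.2 hl₁).le h₀,
            mul_nonneg (sub_pos.2 hl₁).le (sub_nonneg.2 h₁)]) τ hτ,
      mem_Icc_of_hasDerivWithinAt_riccatiRate (p := p) hR hγ (by simp [hv0, h1M])
        (fun τ hτ => (hv τ hτ).snd) (fun τ _ hge => by
          obtain ⟨h₀, h₁⟩ := (hclamp τ).2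
          simp only [p, min_eq_right hge, max_eq_right (by linarith : (0 : ℝ) ≤ M)]
          constructor <;> nlinarith [mul_nonneg hl₀.le h₀, mul_nonneg hl₀.le (sub_nonneg.2 h₁)])
        τ hτ⟩
  exact ⟨v, hv0, fun τ hτ => by simpa [boxClamp_eq_self (hbox τ hτ)] using hv τ hτ⟩

noncomputable def riccatiAnsatz (T ρ γ l : ℝ) (v : ℝ → ℝ × ℝ) (t s : ℝ) : ℝ :=
  l * (exp (-ρ * (s - t)) * (v (T - s)).1) + (1 - l) * (exp (-γ * (s - t)) * (v (T - s)).2)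

section Ansatz

variable {T σ R ρ γ l : ℝ} {v : ℝ → ℝ × ℝ}
  (hv : ∀ τ ∈ Icc 0 T, HasDerivWithinAt v (riccatiField σ R ρ γ l (v τ)) (Icc 0 T) τ)
include hv

theorem hasDerivWithinAt_riccatiAnsatz {t s : ℝ} (ht : 0 ≤ t) (hs : s ∈ Icc t T) :
    HasDerivWithinAt (riccatiAnsatz T ρ γ l v t)
      (-(σ ^ 2 * riccatiAnsatz T ρ γ l v t s
        - 2 / R * riccatiAnsatz T ρ γ l v t s * riccatiAnsatz T ρ γ l v s s
        + (l * exp (-ρ * (s - t)) + (1 - l) * exp (-γ * (s - t)))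
          * riccatiAnsatz T ρ γ l v s s ^ 2 / R)) (Icc t T) s := by
  have hmaps : MapsTo (fun u => T - u) (Icc t T) (Icc 0 T) :=
    fun u hu => ⟨by linarith [hu.2], by linarith [ht, hu.1]⟩
  have hw : HasDerivWithinAt (fun u => v (T - u)) (-riccatiField σ R ρ γ l (v (T - s)))
      (Icc t T) s := by
    simpa [Function.comp_def] using (hv (T - s) (hmaps hs)).scomp s
      ((hasDerivAt_id s).const_sub T).hasDerivWithinAt hmaps
  have hexp : ∀ κ, HasDerivAt (fun u => exp (-κ * (u - t))) (exp (-κ * (s - t)) * -κ) s :=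
    fun κ => (((hasDerivAt_id s).sub_const t).const_mul (-κ)).exp.congr_deriv (by simp)
  refine ((((hexp ρ).hasDerivWithinAt.mul hw.fst).const_mul l).add
    (((hexp γ).hasDerivWithinAt.mul hw.snd).const_mul (1 - l))).congr_deriv ?_
  simp only [riccatiAnsatz, riccatiField, riccatiRate, sub_self, mul_zero, exp_zero,
    Prod.fst_neg, Prod.snd_neg]
  ring

theorem isSinglePlayerRiccatiSolution_riccatiAnsatz (hv0 : v 0 = (1, 1)) :
    ∃ Ps, IsSinglePlayerRiccatiSolution T σ R
      (fun t => l * exp (-ρ * t) + (1 - l) * exp (-γ * t)) (riccatiAnsatz T ρ γ l v) Ps := by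
  have hvc : ContinuousOn v (Icc 0 T) := fun τ hτ => (hv τ hτ).continuousWithinAt
  refine ⟨_, ?_, fun t ht s hs => ⟨hasDerivWithinAt_riccatiAnsatz hv ht.1 hs, by ring⟩,
    fun t _ => by simp [riccatiAnsatz, hv0]⟩
  have hvT : ContinuousOn (fun p : ℝ × ℝ => v (T - p.2))
      {p : ℝ × ℝ | 0 ≤ p.1 ∧ p.1 ≤ p.2 ∧ p.2 ≤ T} :=
    hvc.comp (by fun_prop) fun p hp => ⟨by linarith [hp.2.2], by linarith [hp.1, hp.2.1]⟩
  have hexp : ∀ κ, Continuous fun p : ℝ × ℝ => exp (-κ * (p.2 - p.1)) := fun κ => by fun_prop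
  exact (continuousOn_const.mul ((hexp ρ).continuousOn.mul hvT.fst)).add
    (continuousOn_const.mul ((hexp γ).continuousOn.mul hvT.snd))

end Ansatz

/-- existence and uniqueness for the nonlocal Riccati equation of
the single-player time-inconsistent linear-quadratic problem with non-constant
discounting. -/
theorem single_player_nonlocal_riccati_existence_uniqueness
    (T σ R ρ γ l : ℝ) (hT : 0 < T) (hR : 0 < R)
    (hρ : 0 < ρ) (hργ : ρ < γ) (hl0 : 0 < l) (hl1 : l < 1)
    (α : ℝ → ℝ)
    (hα : α = fun t : ℝ => l * Real.exp (-ρ * t) + (1 - l) * Real.exp (-γ * t)) :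
    ∃ P Ps : ℝ → ℝ → ℝ, IsSinglePlayerRiccatiSolution T σ R α P Ps ∧
      ∀ Q Qs : ℝ → ℝ → ℝ, IsSinglePlayerRiccatiSolution T σ R α Q Qs →
        ∀ t ∈ Set.Icc (0 : ℝ) T, ∀ s ∈ Set.Icc t T, Q t s = P t s := by
  subst hα
  obtain ⟨v, hv0, hv⟩ := exists_hasDerivWithinAt_riccatiField (σ := σ) hR hl0 hl1 hρ.le
    (hρ.trans hργ).le hT.le
  obtain ⟨Ps, hP⟩ := isSinglePlayerRiccatiSolution_riccatiAnsatz hv hv0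
  exact ⟨_, Ps, hP, fun Q Qs hQ => hP.eq_of_continuousOn (by fun_prop) hQ⟩
end
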